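/- Let m(s) = c + gᵀs + (1/2)sᵀHs be a quadratic model with H symmetric positive semidefinite and g ≠ 0, and let Δ > 0. Then the Cauchy point decrease bound holds along the steepest descent direction: there exists t ∈ [0, Δ/‖g‖] such that m(0) - m(-t·g) ≥ (1/2)‖g‖·min(Δ, ‖g‖/‖H‖), where ‖H‖ is the operator norm (interpreted as +∞ giving min = Δ when H = 0). -/

import Mathlib

open Real
open scoped Classical
open scoped RealInnerProductSpace

theorem cauchy_point_decrease (n : ℕ) (hn : 1 ≤ n)
    (g : EuclideanSpace ℝ (Fin n)) (hg : g ≠ 0)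
    (H : EuclideanSpace ℝ (Fin n) →L[ℝ] EuclideanSpace ℝ (Fin n))
    (hsym : IsSelfAdjoint H)
    (hpsd : ∀ x : EuclideanSpace ℝ (Fin n), 0 ≤ ⟪x, H x⟫)
    (c : ℝ) (Δ : ℝ) (hΔ : 0 < Δ)
    (m : EuclideanSpace ℝ (Fin n) → ℝ)
    (hm : ∀ s, m s = c + ⟪g, s⟫ + (1 / 2) * ⟪s, H s⟫) :
    ∃ t ∈ Set.Icc (0 : ℝ) (Δ / ‖g‖),
      m 0 - m (-(t • g)) ≥
        (1 / 2) * ‖g‖ * (if H = 0 then Δ else min Δ (‖g‖ / ‖H‖)) := by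
  have hgn : (0:ℝ) < ‖g‖ := norm_pos_iff.mpr hg
  set κ := ⟪g, H g⟫ with hκdef
  have hκ0 : 0 ≤ κ := hpsd g
  have key : ∀ t : ℝ, m 0 - m (-(t • g)) = t * ‖g‖^2 - t^2/2 * κ := by
    intro t
    simp only [hm, inner_zero_right, map_zero, inner_zero_left, map_neg, map_smul,
      inner_neg_right, inner_neg_left, inner_smul_left, inner_smul_right,
      real_inner_self_eq_norm_sq, RingHom.id_apply, conj_trivial, neg_neg]
    ring
  have hκle : κ ≤ ‖H‖ * ‖g‖^2 := by
    calc κ ≤ ‖g‖ * ‖H g‖ := real_inner_le_norm g (H g)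
    _ ≤ ‖g‖ * (‖H‖ * ‖g‖) := by
        have := H.le_opNorm g
        nlinarith [norm_nonneg g]
    _ = ‖H‖ * ‖g‖^2 := by ring
  by_cases hH : H = 0
  · refine ⟨Δ / ‖g‖, ⟨le_of_lt (div_pos hΔ hgn), le_refl _⟩, ?_⟩
    rw [key]
    have hκz : κ = 0 := by simp [hκdef, hH]
    rw [hκz]
    simp only [hH, if_pos]
    have e : Δ / ‖g‖ * ‖g‖ ^ 2 = Δ * ‖g‖ := by field_simp
    nlinarith
  · simp only [if_neg hH]
    have hHn : (0:ℝ) < ‖H‖ := norm_pos_iff.mpr hH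
    rcases eq_or_lt_of_le hκ0 with hz | hpos
    · refine ⟨Δ / ‖g‖, ⟨le_of_lt (div_pos hΔ hgn), le_refl _⟩, ?_⟩
      rw [key, ← hz]
      have hmin : min Δ (‖g‖ / ‖H‖) ≤ Δ := min_le_left _ _
      have : Δ / ‖g‖ * ‖g‖^2 = Δ * ‖g‖ := by field_simp
      nlinarith
    · set t := min (Δ / ‖g‖) (‖g‖^2 / κ) with htdef
      have ht0 : 0 ≤ t := le_min (le_of_lt (div_pos hΔ hgn)) (by positivity)
      refine ⟨t, ⟨ht0, min_le_left _ _⟩, ?_⟩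
      rw [key]
      have ht2 : t ≤ ‖g‖^2 / κ := min_le_right _ _
      have h1 : t^2/2 * κ ≤ t * ‖g‖^2 / 2 := by
        have : t * κ ≤ ‖g‖^2 := (le_div_iff₀ hpos).mp ht2
        nlinarith
      have h2 : min Δ (‖g‖ / ‖H‖) ≤ t * ‖g‖ := by
        have e : t * ‖g‖ = min ((Δ / ‖g‖) * ‖g‖) ((‖g‖^2 / κ) * ‖g‖) := by
          rw [htdef, min_mul_of_nonneg _ _ (le_of_lt hgn)]
        rw [e]
        apply le_min
        · calc min Δ (‖g‖ / ‖H‖) ≤ Δ := min_le_left _ _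
          _ = (Δ / ‖g‖) * ‖g‖ := by field_simp
        · calc min Δ (‖g‖ / ‖H‖) ≤ ‖g‖ / ‖H‖ := min_le_right _ _
          _ ≤ (‖g‖^2 / κ) * ‖g‖ := by
              rw [div_le_iff₀ hHn, div_mul_eq_mul_div, div_mul_eq_mul_div,
                le_div_iff₀ hpos]
              nlinarith
      nlinarith
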